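/- arXiv:1112.0483 — 10 statements merged into one kernel-verified Lean document; each statement's English description precedes it below -/
import Mathlib

section
/- For p, q > 1 and x ∈ (0,1), one has arcsin_{p,q}(x) > x·(1 + x^q/(p(1+q))). -/
/-!
For `0 < u < 1` and `p > 1`, Bernoulli's inequality for the concave power `s ↦ s ^ (1/p)` gives
`(1 - u) ^ (1/p) < 1 - u/p`, and since `(1 + u/p)(1 - u/p) < 1` this yields
`1 + u/p < (1 - u) ^ (-1/p)`. Taking `u = t ^ q` and integrating over `[0, x]` gives the bound.
-/

open Real Set

noncomputable def arcsinpq (p q x : ℝ) : ℝ :=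
  ∫ t in (0:ℝ)..x, (1 - t ^ q) ^ (-1/p)

open intervalIntegral

theorem one_add_mul_lt_one_sub_rpow_neg {a u : ℝ} (ha₀ : 0 < a) (ha₁ : a < 1) (hu : u < 1)
    (hu₀ : u ≠ 0) : 1 + a * u < (1 - u) ^ (-a) := by
  have hbernoulli : (1 - u) ^ a < 1 - a * u := by
    simpa [sub_eq_add_neg] using
      rpow_one_add_lt_one_add_mul_self (s := -u) (by linarith) (neg_ne_zero.2 hu₀) ha₀ ha₁
  have hpos : 0 < (1 - u) ^ a := rpow_pos_of_pos (by linarith) a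
  rw [rpow_neg (by linarith), ← one_div, lt_div_iff₀ hpos]
  nlinarith [mul_self_pos.2 (mul_ne_zero ha₀.ne' hu₀)]

theorem integral_one_add_rpow_div {p q x : ℝ} (hq : -1 < q) (hx : 0 ≤ x) :
    ∫ t in (0 : ℝ)..x, (1 + t ^ q / p) = x * (1 + x ^ q / (p * (1 + q))) := by
  have hq₁ : q + 1 ≠ 0 := by linarith
  rw [integral_add intervalIntegrable_const ((intervalIntegrable_rpow' hq).div_const p),
    integral_div, integral_rpow (Or.inl hq), integral_const, zero_rpow hq₁,
    rpow_add' hx hq₁, rpow_one, mul_comm p, ← div_div, add_comm q]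
  ring

theorem continuousOn_one_sub_rpow_rpow {q r x : ℝ} (hq : 0 < q) (hx : x < 1) :
    ContinuousOn (fun t : ℝ ↦ (1 - t ^ q) ^ r) (Icc 0 x) := by
  refine ((continuousOn_const.sub (continuousOn_id.rpow_const fun _ _ ↦ Or.inr hq.le))).rpow_const
    fun t ht ↦ Or.inl ?_
  exact (sub_pos.2 (rpow_lt_one ht.1 (ht.2.trans_lt hx) hq)).ne'

theorem stmt0 (p q x : ℝ) (hp : 1 < p) (hq : 1 < q) (hx : x ∈ Ioo (0:ℝ) 1) :
    x * (1 + x ^ q / (p * (1 + q))) < arcsinpq p q x := by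
  obtain ⟨hx₀, hx₁⟩ := hx
  have hq₀ : 0 < q := by linarith
  have hlt : ∀ t ∈ Ioc 0 x, 1 + t ^ q / p < (1 - t ^ q) ^ (-1 / p) := by
    rintro t ⟨ht₀, htx⟩
    have h := one_add_mul_lt_one_sub_rpow_neg (by positivity) ((div_lt_one (by linarith)).2 hp)
      (rpow_lt_one ht₀.le (htx.trans_lt hx₁) hq₀) (rpow_pos_of_pos ht₀ q).ne'
    rwa [one_div_mul_eq_div, ← neg_div] at h
  have hcont : ContinuousOn (fun t : ℝ ↦ 1 + t ^ q / p) (Icc 0 x) :=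
    continuousOn_const.add ((continuousOn_id.rpow_const fun _ _ ↦ Or.inr hq₀.le).div_const p)
  rw [arcsinpq, ← integral_one_add_rpow_div (by linarith) hx₀.le]
  exact integral_lt_integral_of_continuousOn_of_le_of_exists_lt hx₀ hcont
    (continuousOn_one_sub_rpow_rpow hq₀ hx₁) (fun t ht ↦ (hlt t ht).le)
    ⟨x, right_mem_Icc.2 hx₀.le, hlt x ⟨hx₀, le_rfl⟩⟩
end

section
/- For p, q > 1 and x ∈ (0,1), one has arcsin_{p,q}(x) < x·(1 - x^q)^{-1/(p(1+q))}. -/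
open Real Set

/-!
With `c = 1/(p(1+q))` one has `-1/p = -(c + cq)`, and `G(t) = t (1 - t^q)^(-c)` has derivative
`(1 - t^q)^(-c-1) (1 - (1 - cq) t^q)`. Bernoulli's inequality `(1 - u)^(1-s) < 1 - (1 - s) u`
for `s = cq ∈ (0,1)` shows that this derivative strictly dominates the integrand
`(1 - t^q)^(-1/p)` on `(0, x]`, so integrating gives `arcsin_{p,q}(x) < G(x)`.
-/

lemma one_sub_rpow_neg_add_lt {u s : ℝ} (a : ℝ) (hu : u ∈ Ioo 0 1) (hs : s ∈ Ioo 0 1) :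
    (1 - u) ^ (-(a + s)) < (1 - u) ^ (-a - 1) * (1 - (1 - s) * u) := by
  have hu' : 0 < 1 - u := by linarith [hu.2]
  have hsplit : (1 - u) ^ (-(a + s)) = (1 - u) ^ (-a - 1) * (1 - u) ^ (1 - s) := by
    rw [← rpow_add hu']; ring_nf
  have hbernoulli : (1 - u) ^ (1 - s) < 1 - (1 - s) * u := by
    have := rpow_one_add_lt_one_add_mul_self (s := -u) (by linarith [hu.2]) (by linarith [hu.1])
      (p := 1 - s) (by linarith [hs.2]) (by linarith [hs.1])
    simpa [sub_eq_add_neg] using this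
  rw [hsplit]
  exact mul_lt_mul_of_pos_left hbernoulli (rpow_pos_of_pos hu' _)

lemma hasDerivAt_mul_one_sub_rpow_rpow {q t : ℝ} (c : ℝ) (ht : 0 < t) (htq : t ^ q < 1) :
    HasDerivAt (fun y => y * (1 - y ^ q) ^ (-c))
      ((1 - t ^ q) ^ (-c - 1) * (1 - (1 - c * q) * t ^ q)) t := by
  have hbase : 0 < 1 - t ^ q := by linarith
  have hpow : HasDerivAt (fun y => (1 - y ^ q) ^ (-c))
      (-(q * t ^ (q - 1)) * -c * (1 - t ^ q) ^ (-c - 1)) t :=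
    ((hasDerivAt_rpow_const (Or.inl ht.ne')).const_sub 1).rpow_const (Or.inl hbase.ne')
  refine ((hasDerivAt_id' t).mul hpow).congr_deriv ?_
  have h1 : (1 - t ^ q) ^ (-c) = (1 - t ^ q) ^ (-c - 1) * (1 - t ^ q) := by
    rw [← rpow_add_one hbase.ne']; ring_nf
  have h2 : t * t ^ (q - 1) = t ^ q := by
    rw [rpow_sub_one ht.ne']; field_simp
  rw [h1]
  linear_combination (c * q * (1 - t ^ q) ^ (-c - 1)) * h2

lemma integral_one_sub_rpow_lt {q c x : ℝ} (hq : 0 < q) (hc : 0 < c) (hcq : c * q < 1)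
    (hx : x ∈ Ioo 0 1) :
    ∫ t in (0:ℝ)..x, (1 - t ^ q) ^ (-(c + c * q)) < x * (1 - x ^ q) ^ (-c) := by
  obtain ⟨hx0, hx1⟩ := hx
  have hlt_one : ∀ t ∈ Icc 0 x, t ^ q < 1 := fun t ht =>
    (rpow_le_rpow ht.1 ht.2 hq.le).trans_lt (rpow_lt_one hx0.le hx1 hq)
  have hbase : ContinuousOn (fun t : ℝ => 1 - t ^ q) (Icc 0 x) :=
    (continuous_const.sub (continuous_rpow_const hq.le)).continuousOn
  have hbase_rpow (r : ℝ) : ContinuousOn (fun t : ℝ => (1 - t ^ q) ^ r) (Icc 0 x) :=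
    hbase.rpow_const fun t ht => Or.inl (by linarith [hlt_one t ht])
  set g : ℝ → ℝ := fun t => (1 - t ^ q) ^ (-c - 1) * (1 - (1 - c * q) * t ^ q)
  have hg : ContinuousOn g (Icc 0 x) :=
    (hbase_rpow _).mul
      (continuous_const.sub (continuous_const.mul (continuous_rpow_const hq.le))).continuousOn
  have hftc : ∫ t in (0:ℝ)..x, g t = x * (1 - x ^ q) ^ (-c) := by
    rw [intervalIntegral.integral_eq_sub_of_hasDerivAt_of_le hx0.le
      (continuousOn_id.mul (hbase_rpow _))
      (fun t ht => hasDerivAt_mul_one_sub_rpow_rpow c ht.1 (hlt_one t (Ioo_subset_Icc_self ht)))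
      (hg.intervalIntegrable_of_Icc hx0.le)]
    simp
  have hlt : ∀ t ∈ Ioc 0 x, (1 - t ^ q) ^ (-(c + c * q)) < g t := fun t ht =>
    one_sub_rpow_neg_add_lt c ⟨rpow_pos_of_pos ht.1 q, hlt_one t (Ioc_subset_Icc_self ht)⟩
      ⟨by positivity, hcq⟩
  rw [← hftc]
  exact intervalIntegral.integral_lt_integral_of_continuousOn_of_le_of_exists_lt hx0
    (hbase_rpow _) hg (fun t ht => (hlt t ht).le)
    ⟨x, right_mem_Icc.2 hx0.le, hlt x (right_mem_Ioc.2 hx0)⟩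

theorem stmt1 (p q x : ℝ) (hp : 1 < p) (hq : 1 < q) (hx : x ∈ Ioo (0:ℝ) 1) :
    arcsinpq p q x < x * (1 - x ^ q) ^ (-(1 / (p * (1 + q)))) := by
  have hq0 : 0 < q := by linarith
  have hpq : 0 < p * (1 + q) := by positivity
  have hexp : -1 / p = -(1 / (p * (1 + q)) + 1 / (p * (1 + q)) * q) := by
    field_simp
  have hcq : 1 / (p * (1 + q)) * q < 1 := by
    rw [div_mul_eq_mul_div, one_mul, div_lt_one hpq]; nlinarith
  unfold arcsinpq
  rw [hexp]
  exact integral_one_sub_rpow_lt hq0 (by positivity) hcq hx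
end

section
/- For p, q > 1 and x ∈ (0,1), one has arsinh_{p,q}(x) < (x^p/(1+x^q))^{1/p} · (1 - x^q/(1+x^q))^{-q/(p(q+1))}. -/
/-!
With `γ = 1 / (p (q + 1))` and `u = 1 + t ^ q`, the right-hand side equals `G x` where
`G t = t u ^ (-γ)`, and `G' t = u ^ (-γ) (1 + qγ (u⁻¹ - 1))`. Since `1 / p = γ + qγ` with
`0 < qγ < 1`, Bernoulli's inequality `u ^ (-qγ) < 1 + qγ (u⁻¹ - 1)` for `u > 1` puts the
integrand `u ^ (-1/p)` strictly below `G'` on `(0, x]`; integrating gives the claim.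
-/

open Real Set

noncomputable def arsinhpq (p q x : ℝ) : ℝ :=
  ∫ t in (0:ℝ)..x, (1 + t ^ q) ^ (-1/p)

theorem rpow_neg_lt_one_add_mul_inv_sub_one {u β : ℝ} (hu : 1 < u) (hβ₀ : 0 < β) (hβ₁ : β < 1) :
    u ^ (-β) < 1 + β * (u⁻¹ - 1) := by
  have hu₀ : 0 < u := by linarith
  have h := rpow_one_add_lt_one_add_mul_self (s := u⁻¹ - 1) (by linarith [inv_pos.2 hu₀])
    (sub_ne_zero.2 (inv_lt_one_of_one_lt₀ hu).ne) hβ₀ hβ₁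
  rwa [add_sub_cancel, inv_rpow hu₀.le, ← rpow_neg hu₀.le] at h

theorem hasDerivAt_mul_one_add_rpow_neg {q γ t : ℝ} (ht : 0 < t) :
    HasDerivAt (fun s : ℝ => s * (1 + s ^ q) ^ (-γ))
      ((1 + t ^ q) ^ (-γ) * (1 + q * γ * ((1 + t ^ q)⁻¹ - 1))) t := by
  have hu : 0 < 1 + t ^ q := by positivity
  have hpow := ((hasDerivAt_rpow_const (p := q) (Or.inl ht.ne')).const_add 1).rpow_const
    (p := -γ) (Or.inl hu.ne')
  refine ((hasDerivAt_id t).mul hpow).congr_deriv ?_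
  rw [rpow_sub_one hu.ne', rpow_sub_one ht.ne', id]
  field_simp
  ring

theorem one_add_rpow_neg_lt_deriv {q γ t : ℝ} (hq : 0 < q) (hγ : 0 < γ) (hqγ : q * γ < 1)
    (ht : 0 < t) :
    (1 + t ^ q) ^ (-(γ + q * γ)) < (1 + t ^ q) ^ (-γ) * (1 + q * γ * ((1 + t ^ q)⁻¹ - 1)) := by
  have hu : 1 < 1 + t ^ q := by linarith [rpow_pos_of_pos ht q]
  rw [neg_add, rpow_add (by linarith)]
  exact mul_lt_mul_of_pos_left
    (rpow_neg_lt_one_add_mul_inv_sub_one hu (by positivity) hqγ) (by positivity)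

theorem continuous_one_add_rpow {q : ℝ} (hq : 0 < q) : Continuous fun t : ℝ => 1 + t ^ q :=
  continuous_const.add (continuous_rpow_const hq.le)

theorem integral_one_add_rpow_neg_lt {q γ x : ℝ} (hq : 0 < q) (hγ : 0 < γ) (hqγ : q * γ < 1)
    (hx : 0 < x) :
    ∫ t in (0:ℝ)..x, (1 + t ^ q) ^ (-(γ + q * γ)) < x * (1 + x ^ q) ^ (-γ) := by
  have hu : ∀ t ∈ Icc 0 x, 1 + t ^ q ≠ 0 := fun t ht => by
    have := rpow_nonneg ht.1 q; positivity
  have hcont (r : ℝ) : ContinuousOn (fun t : ℝ => (1 + t ^ q) ^ r) (Icc 0 x) :=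
    (continuous_one_add_rpow hq).continuousOn.rpow_const fun t ht => Or.inl (hu t ht)
  have hcontDeriv : ContinuousOn
      (fun t : ℝ => (1 + t ^ q) ^ (-γ) * (1 + q * γ * ((1 + t ^ q)⁻¹ - 1))) (Icc 0 x) :=
    (hcont _).mul (continuousOn_const.add (continuousOn_const.mul
      (((continuous_one_add_rpow hq).continuousOn.inv₀ hu).sub continuousOn_const)))
  have hlt := fun t (ht : t ∈ Ioc 0 x) => one_add_rpow_neg_lt_deriv (γ := γ) hq hγ hqγ ht.1
  calc ∫ t in (0:ℝ)..x, (1 + t ^ q) ^ (-(γ + q * γ))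
      < ∫ t in (0:ℝ)..x, (1 + t ^ q) ^ (-γ) * (1 + q * γ * ((1 + t ^ q)⁻¹ - 1)) :=
        intervalIntegral.integral_lt_integral_of_continuousOn_of_le_of_exists_lt hx (hcont _)
          hcontDeriv (fun t ht => (hlt t ht).le) ⟨x, ⟨hx.le, le_rfl⟩, hlt x ⟨hx, le_rfl⟩⟩
    _ = x * (1 + x ^ q) ^ (-γ) := by
        rw [intervalIntegral.integral_eq_sub_of_hasDerivAt_of_le hx.le
          (continuousOn_id.mul (hcont _)) (fun t ht => hasDerivAt_mul_one_add_rpow_neg ht.1)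
          (hcontDeriv.intervalIntegrable_of_Icc hx.le)]
        simp

theorem rpow_div_one_add_mul_one_sub_div_rpow {p q x : ℝ} (hp : p ≠ 0) (hq : q + 1 ≠ 0)
    (hx : 0 ≤ x) :
    (x ^ p / (1 + x ^ q)) ^ (1/p) * (1 - x ^ q / (1 + x ^ q)) ^ (-(q / (p * (q + 1)))) =
      x * (1 + x ^ q) ^ (-(1 / (p * (q + 1)))) := by
  have hu : 0 < 1 + x ^ q := by have := rpow_nonneg hx q; positivity
  have h1 : 1 - x ^ q / (1 + x ^ q) = (1 + x ^ q)⁻¹ := by field_simp; ring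
  rw [h1, div_rpow (rpow_nonneg hx p) hu.le, one_div, rpow_rpow_inv hx hp, inv_rpow hu.le,
    ← rpow_neg hu.le, neg_neg, div_eq_mul_inv, mul_assoc, ← rpow_neg hu.le, ← rpow_add hu]
  congr 2
  field_simp
  ring

theorem stmt3 (p q x : ℝ) (hp : 1 < p) (hq : 1 < q) (hx : x ∈ Ioo (0:ℝ) 1) :
    arsinhpq p q x < (x ^ p / (1 + x ^ q)) ^ (1/p) *
      (1 - x ^ q / (1 + x ^ q)) ^ (-(q / (p * (q + 1)))) := by
  have hexp : -1 / p = -(1 / (p * (q + 1)) + q * (1 / (p * (q + 1)))) := by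
    field_simp; ring
  have hqγ : q * (1 / (p * (q + 1))) < 1 := by
    rw [mul_one_div, div_lt_one (by positivity)]; nlinarith
  rw [rpow_div_one_add_mul_one_sub_div_rpow (by positivity) (by positivity) hx.1.le, arsinhpq,
    hexp]
  exact integral_one_add_rpow_neg_lt (by positivity) (by positivity) hqγ hx.1
end

section
/- For p, q > 1 and x ∈ (0,1), one has arsinh_{p,q}(x) > (x^p/(1+x^q))^{1/p} · (1 - q·x^q/(p(1+q)(1+x^q)))^{-1}. -/
/-!
Write `F = arsinhpq p q`, `f t = (1 + t^q)^(-1/p)` for its integrand and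
`D y = 1 - q y^q / (p (1 + q) (1 + y^q))`. Since `(y^p / (1 + y^q))^(1/p) = y f(y)` and `D > 0`,
the claim is `G x > 0` for `G y = F(y) D(y) - y f(y)`. Now `G 0 = 0` and
`G'(y) = q² y^(q-1) / (p (1 + q) (1 + y^q)²) · (y (1 + y^q) f(y) - F(y))`,
which is positive because `(1 + y^q) f(y) = (1 + y^q)^(1 - 1/p) > 1` while `F(y) ≤ y`
(as `f ≤ 1`).
-/

open Real Set

namespace Arsinhpq

noncomputable def integrand (p q t : ℝ) : ℝ := (1 + t ^ q) ^ (-1/p)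

noncomputable def correction (p q y : ℝ) : ℝ := 1 - q * y ^ q / (p * (1 + q) * (1 + y ^ q))

noncomputable def gap (p q y : ℝ) : ℝ := arsinhpq p q y * correction p q y - y * integrand p q y

variable {p q : ℝ}

lemma one_add_rpow_pos {t : ℝ} (ht : 0 ≤ t) : 0 < 1 + t ^ q := by
  positivity

lemma continuousOn_integrand (hq : 0 ≤ q) : ContinuousOn (integrand p q) (Ici 0) :=
  ((continuous_const.add (continuous_rpow_const hq)).continuousOn).rpow_const
    fun _ ht => Or.inl (one_add_rpow_pos ht).ne'

lemma integrableOn_integrand (hq : 0 ≤ q) {x : ℝ} (hx : 0 ≤ x) :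
    MeasureTheory.IntegrableOn (integrand p q) (uIcc 0 x) := by
  rw [uIcc_of_le hx]
  exact ((continuousOn_integrand hq).mono Icc_subset_Ici_self).integrableOn_Icc

lemma hasDerivAt_arsinhpq (hq : 0 ≤ q) {y : ℝ} (hy : 0 < y) :
    HasDerivAt (arsinhpq p q) (integrand p q y) y := by
  have hcont : ContinuousOn (integrand p q) (Ioi 0) :=
    (continuousOn_integrand hq).mono Ioi_subset_Ici_self
  exact intervalIntegral.integral_hasDerivAt_right
    (integrableOn_integrand hq hy.le).intervalIntegrable
    (hcont.stronglyMeasurableAtFilter isOpen_Ioi y hy)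
    (hcont.continuousAt (Ioi_mem_nhds hy))

lemma continuousOn_arsinhpq (hq : 0 ≤ q) {x : ℝ} (hx : 0 ≤ x) :
    ContinuousOn (arsinhpq p q) (Icc 0 x) := by
  rw [← uIcc_of_le hx]
  exact intervalIntegral.continuousOn_primitive_interval (integrableOn_integrand hq hx)

lemma integrand_le_one (hp : 0 ≤ p) {t : ℝ} (ht : 0 ≤ t) : integrand p q t ≤ 1 :=
  rpow_le_one_of_one_le_of_nonpos (le_add_of_nonneg_right (rpow_nonneg ht q))
    (div_nonpos_of_nonpos_of_nonneg (by norm_num) hp)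

lemma arsinhpq_le_self (hp : 0 ≤ p) (hq : 0 ≤ q) {x : ℝ} (hx : 0 ≤ x) :
    arsinhpq p q x ≤ x := by
  have h := intervalIntegral.integral_mono_on hx
    (integrableOn_integrand hq hx).intervalIntegrable intervalIntegrable_const
    fun t ht => integrand_le_one (q := q) hp ht.1
  simpa [arsinhpq, integrand] using h

lemma one_lt_one_add_rpow_mul_integrand (hp : 1 < p) {y : ℝ} (hy : 0 < y) :
    1 < (1 + y ^ q) * integrand p q y := by
  have hA : 1 < 1 + y ^ q := lt_add_of_pos_right 1 (rpow_pos_of_pos hy q)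
  have hexp : (1 + y ^ q) * integrand p q y = (1 + y ^ q) ^ (1 - 1/p) := by
    rw [integrand, show (1:ℝ) - 1/p = 1 + (-1/p) by ring, rpow_add (by linarith), rpow_one]
  rw [hexp]
  exact one_lt_rpow hA (by rw [sub_pos, div_lt_one (by linarith)]; exact hp)

lemma continuousOn_correction (hp : 0 < p) (hq : 0 ≤ q) :
    ContinuousOn (correction p q) (Ici 0) := by
  have hpow := continuous_rpow_const hq
  refine continuousOn_const.sub ((continuous_const.mul hpow).continuousOn.div
    (continuous_const.mul (continuous_const.add hpow)).continuousOn fun t ht => ?_)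
  have := one_add_rpow_pos (q := q) ht
  positivity

lemma correction_pos (hp : 1 ≤ p) (hq : 0 ≤ q) {x : ℝ} (hx : 0 ≤ x) :
    0 < correction p q x := by
  have hxq : 0 ≤ x ^ q := rpow_nonneg hx q
  rw [correction, sub_pos, div_lt_one (by positivity)]
  calc q * x ^ q < (1 + q) * (1 + x ^ q) := by nlinarith
    _ ≤ p * (1 + q) * (1 + x ^ q) := by
      rw [mul_assoc]; exact le_mul_of_one_le_left (by positivity) hp

lemma hasDerivAt_gap (hp : 0 < p) (hq : 0 ≤ q) {y : ℝ} (hy : 0 < y) :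
    HasDerivAt (gap p q)
      (q ^ 2 * y ^ (q - 1) / (p * (1 + q) * (1 + y ^ q) ^ 2) *
        (y * (1 + y ^ q) * integrand p q y - arsinhpq p q y)) y := by
  have hA : 0 < 1 + y ^ q := one_add_rpow_pos hy.le
  have hM : 0 < p * (1 + q) * (1 + y ^ q) := by positivity
  have hpow : HasDerivAt (fun t : ℝ => t ^ q) (q * y ^ (q - 1)) y :=
    hasDerivAt_rpow_const (Or.inl hy.ne')
  have hbase := hpow.const_add 1
  have hintegrand : HasDerivAt (integrand p q)
      (q * y ^ (q - 1) * (-1/p) * (1 + y ^ q) ^ (-1/p - 1)) y :=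
    hbase.rpow_const (Or.inl hA.ne')
  have hcorrection : HasDerivAt (correction p q)
      (-((q * (q * y ^ (q - 1)) * (p * (1 + q) * (1 + y ^ q)) -
          q * y ^ q * (p * (1 + q) * (q * y ^ (q - 1)))) / (p * (1 + q) * (1 + y ^ q)) ^ 2)) y :=
    ((hpow.const_mul q).div (hbase.const_mul (p * (1 + q))) hM.ne').const_sub 1
  have hgap : HasDerivAt (gap p q) _ y :=
    ((hasDerivAt_arsinhpq (p := p) hq hy).mul hcorrection).sub ((hasDerivAt_id y).mul hintegrand)
  refine hgap.congr_deriv ?_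
  have hsplit : (1 + y ^ q) ^ (-1/p - 1) = (1 + y ^ q) ^ (-1/p) / (1 + y ^ q) := by
    rw [rpow_sub hA, rpow_one]
  have hyq : y ^ q = y * y ^ (q - 1) := by
    conv_lhs => rw [show q = 1 + (q - 1) by ring, rpow_add hy, rpow_one]
  simp only [integrand, correction, id, hsplit]
  rw [hyq]
  field_simp
  ring

lemma deriv_gap_pos (hp : 1 < p) (hq : 0 < q) {y : ℝ} (hy : 0 < y) : 0 < deriv (gap p q) y := by
  rw [(hasDerivAt_gap (by linarith) hq.le hy).deriv]
  have hweight : 0 < y * (1 + y ^ q) * integrand p q y - arsinhpq p q y := by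
    have := mul_lt_mul_of_pos_left (one_lt_one_add_rpow_mul_integrand (q := q) hp hy) hy
    linarith [arsinhpq_le_self (p := p) (by linarith) hq.le hy.le]
  have hdenom : 0 < p * (1 + q) * (1 + y ^ q) ^ 2 := by positivity
  positivity

lemma continuousOn_gap (hp : 0 < p) (hq : 0 ≤ q) {x : ℝ} (hx : 0 ≤ x) :
    ContinuousOn (gap p q) (Icc 0 x) :=
  ((continuousOn_arsinhpq hq hx).mul ((continuousOn_correction hp hq).mono Icc_subset_Ici_self)).sub
    (continuousOn_id.mul ((continuousOn_integrand hq).mono Icc_subset_Ici_self))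

lemma gap_pos (hp : 1 < p) (hq : 0 < q) {x : ℝ} (hx : 0 < x) : 0 < gap p q x := by
  have hmono : StrictMonoOn (gap p q) (Icc 0 x) :=
    strictMonoOn_of_deriv_pos (convex_Icc 0 x) (continuousOn_gap (by linarith) hq.le hx.le)
      fun y hy => deriv_gap_pos hp hq (by rw [interior_Icc] at hy; exact hy.1)
  have hzero : gap p q 0 = 0 := by simp [gap, arsinhpq]
  simpa [hzero] using hmono (left_mem_Icc.2 hx.le) (right_mem_Icc.2 hx.le) hx

lemma rpow_div_one_add_rpow_rpow_one_div (hp : p ≠ 0) {x : ℝ} (hx : 0 ≤ x) :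
    (x ^ p / (1 + x ^ q)) ^ (1/p) = x * integrand p q x := by
  rw [div_rpow (rpow_nonneg hx p) (one_add_rpow_pos hx).le, ← rpow_mul hx, mul_one_div_cancel hp,
    rpow_one, integrand, neg_div, rpow_neg (one_add_rpow_pos hx).le, div_eq_mul_inv]

end Arsinhpq

theorem stmt4 (p q x : ℝ) (hp : 1 < p) (hq : 1 < q) (hx : x ∈ Ioo (0:ℝ) 1) :
    (x ^ p / (1 + x ^ q)) ^ (1/p) *
      (1 - q * x ^ q / (p * (1 + q) * (1 + x ^ q)))⁻¹ < arsinhpq p q x := by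
  have hx0 : 0 < x := hx.1
  have hq0 : 0 < q := by linarith
  rw [Arsinhpq.rpow_div_one_add_rpow_rpow_one_div (by linarith) hx0.le, ← Arsinhpq.correction,
    ← div_eq_mul_inv, div_lt_iff₀ (Arsinhpq.correction_pos hp.le hq0.le hx0.le)]
  exact sub_pos.mp (Arsinhpq.gap_pos hp hq0 hx0)
end

section
/- For p, q > 1 and x ∈ (0,1), one has arsinh_{p,q}(x) > x · ((pq + p + q·x^q)/(p(q+1)))^{-1/q}. -/
/-! Put `c = q / (p (q + 1))`. The function `x (1 + c x^q)^(-1/q)`, which is the lower bound,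
has derivative `(1 + c x^q)^(-1/q - 1)`, so it suffices to compare integrands on `(0, x]`.
Since `c (1 + 1/q) = 1/p` and `0 < c < 1`, Bernoulli's inequality `(1 + u)^c < 1 + c u` raised
to the power `1 + 1/q` gives `(1 + u)^(1/p) < (1 + c u)^(1 + 1/q)` for `u = t^q > 0`. -/

open Real Set

lemma hasDerivAt_mul_one_add_mul_rpow_neg_inv {c q t : ℝ} (hq : 1 ≤ q) (ht : 0 ≤ t)
    (hA : 0 < 1 + c * t ^ q) :
    HasDerivAt (fun s : ℝ => s * (1 + c * s ^ q) ^ (-(1/q)))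
      ((1 + c * t ^ q) ^ (-(1/q) - 1)) t := by
  have hq0 : q ≠ 0 := by linarith
  have hinner : HasDerivAt (fun s : ℝ => 1 + c * s ^ q) (c * (q * t ^ (q - 1))) t :=
    ((hasDerivAt_rpow_const (Or.inr hq)).const_mul c).const_add 1
  refine ((hasDerivAt_id t).fun_mul (hinner.rpow_const (Or.inl hA.ne'))).congr_deriv ?_
  have htq : t * t ^ (q - 1) = t ^ q := by
    rcases ht.eq_or_lt with rfl | htpos
    · rw [zero_rpow hq0, zero_mul]
    · rw [mul_comm, ← rpow_add_one htpos.ne', sub_add_cancel]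
  have hsplit : (1 + c * t ^ q) ^ (-(1/q)) =
      (1 + c * t ^ q) * (1 + c * t ^ q) ^ (-(1/q) - 1) := by
    rw [rpow_sub_one hA.ne', mul_div_cancel₀ _ hA.ne']
  have hchain : t * (c * (q * t ^ (q - 1)) * (-(1/q)) * (1 + c * t ^ q) ^ (-(1/q) - 1))
      = -(c * t ^ q * (1 + c * t ^ q) ^ (-(1/q) - 1)) := by
    rw [← htq]; field_simp
  rw [id_eq, hchain, hsplit]; ring

lemma continuousOn_one_add_mul_rpow {c q : ℝ} (r : ℝ) (hc : 0 ≤ c) (hq : 0 ≤ q) :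
    ContinuousOn (fun t : ℝ => (1 + c * t ^ q) ^ r) (Ici 0) := by
  refine ContinuousOn.rpow_const (Continuous.continuousOn ?_) fun t ht => Or.inl ?_
  · exact continuous_const.add (continuous_const.mul (continuous_rpow_const hq))
  · have : 0 ≤ c * t ^ q := mul_nonneg hc (rpow_nonneg ht q)
    positivity

lemma integral_one_add_mul_rpow_neg_inv_sub_one {c q x : ℝ} (hc : 0 ≤ c) (hq : 1 ≤ q)
    (hx : 0 ≤ x) :
    ∫ t in (0:ℝ)..x, (1 + c * t ^ q) ^ (-(1/q) - 1) = x * (1 + c * x ^ q) ^ (-(1/q)) := by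
  have hderiv : ∀ t ∈ uIcc 0 x, HasDerivAt (fun s : ℝ => s * (1 + c * s ^ q) ^ (-(1/q)))
      ((1 + c * t ^ q) ^ (-(1/q) - 1)) t := by
    intro t ht
    rw [uIcc_of_le hx] at ht
    have : 0 ≤ c * t ^ q := mul_nonneg hc (rpow_nonneg ht.1 q)
    exact hasDerivAt_mul_one_add_mul_rpow_neg_inv hq ht.1 (by positivity)
  have hint : IntervalIntegrable (fun t : ℝ => (1 + c * t ^ q) ^ (-(1/q) - 1))
      MeasureTheory.volume 0 x :=
    ((continuousOn_one_add_mul_rpow _ hc (by linarith)).mono Icc_subset_Ici_self)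
      |>.intervalIntegrable_of_Icc hx
  rw [intervalIntegral.integral_eq_sub_of_hasDerivAt hderiv hint]
  simp

lemma one_add_mul_rpow_neg_inv_sub_one_lt {p q u : ℝ} (hp : 1 ≤ p) (hq : 0 < q) (hu : 0 < u) :
    (1 + q / (p * (q + 1)) * u) ^ (-(1/q) - 1) < (1 + u) ^ (-1/p) := by
  set c : ℝ := q / (p * (q + 1)) with hc
  have hc0 : 0 < c := by positivity
  have hc1 : c < 1 := by rw [hc, div_lt_one (by positivity)]; nlinarith
  have hexp : c * (1 + 1/q) = 1/p := by rw [hc]; field_simp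
  have hmain : (1 + u) ^ (1/p) < (1 + c * u) ^ (1 + 1/q) :=
    calc (1 + u) ^ (1/p) = ((1 + u) ^ c) ^ (1 + 1/q) := by rw [← hexp, rpow_mul (by positivity)]
      _ < (1 + c * u) ^ (1 + 1/q) :=
        rpow_lt_rpow (by positivity)
          (rpow_one_add_lt_one_add_mul_self (by linarith) hu.ne' hc0 hc1) (by positivity)
  have hlhs : (1 + c * u) ^ (-(1/q) - 1) = ((1 + c * u) ^ (1 + 1/q))⁻¹ := by
    rw [← rpow_neg (by positivity)]; ring_nf
  have hrhs : (1 + u) ^ (-1/p) = ((1 + u) ^ (1/p))⁻¹ := by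
    rw [← rpow_neg (by positivity)]; ring_nf
  rw [hlhs, hrhs]
  exact inv_strictAnti₀ (by positivity) hmain

theorem stmt5 (p q x : ℝ) (hp : 1 < p) (hq : 1 < q) (hx : x ∈ Ioo (0:ℝ) 1) :
    x * ((p * q + p + q * x ^ q) / (p * (q + 1))) ^ (-(1/q)) < arsinhpq p q x := by
  obtain ⟨hx0, -⟩ := hx
  set c : ℝ := q / (p * (q + 1))
  have hp0 : 0 < p := by linarith
  have hq0 : 0 < q := by linarith
  have hbase : (p * q + p + q * x ^ q) / (p * (q + 1)) = 1 + c * x ^ q := by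
    simp only [c]; field_simp
  have hpointwise : ∀ t ∈ Ioc 0 x, (1 + c * t ^ q) ^ (-(1/q) - 1) < (1 + t ^ q) ^ (-1/p) :=
    fun t ht => one_add_mul_rpow_neg_inv_sub_one_lt hp.le hq0 (rpow_pos_of_pos ht.1 q)
  rw [hbase, ← integral_one_add_mul_rpow_neg_inv_sub_one (by positivity) hq.le hx0.le]
  refine intervalIntegral.integral_lt_integral_of_continuousOn_of_le_of_exists_lt hx0
    ((continuousOn_one_add_mul_rpow _ (by positivity) hq0.le).mono Icc_subset_Ici_self)
    (by simpa using ((continuousOn_one_add_mul_rpow (-1/p) zero_le_one hq0.le).mono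
      Icc_subset_Ici_self))
    (fun t ht => (hpointwise t ht).le) ⟨x, right_mem_Icc.2 hx0.le, hpointwise x ⟨hx0, le_rfl⟩⟩
end

section
/- Fix p, q > 1 and x ∈ (0,1). The function k ↦ (arcsin_{p,q}(x^k))^{1/k} is decreasing on (0,∞). -/
/-!
With `y = x ^ a` and `c = b / a ≥ 1`, monotonicity in `k` reduces to `F (y ^ c) ≤ F y ^ c` for
`F = arcsinpq p q` and `y ∈ (0, 1)`. Since `F 0 = 0`, it suffices that `s ↦ F s ^ c - F (s ^ c)` is
nondecreasing on `[0, y]`; this holds because the integrand `F'` is increasing and at least `1`,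
so that `F s ≥ s ≥ s ^ c`.
-/

open Real Set

section DerivativeComparison

variable {F f : ℝ → ℝ} {y : ℝ}

theorem self_le_of_hasDerivAt_of_one_le (hF0 : F 0 = 0)
    (hF : ∀ s ∈ Icc 0 y, HasDerivAt F (f s) s) (hf : ∀ s ∈ Icc 0 y, 1 ≤ f s) :
    ∀ s ∈ Icc 0 y, s ≤ F s := by
  have hderiv : ∀ s ∈ Icc 0 y, HasDerivAt (fun s => F s - s) (f s - 1) s :=
    fun s hs => (hF s hs).sub (hasDerivAt_id s)
  have hmono : MonotoneOn (fun s => F s - s) (Icc 0 y) :=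
    monotoneOn_of_hasDerivWithinAt_nonneg (convex_Icc 0 y)
      (fun s hs => (hderiv s hs).continuousAt.continuousWithinAt)
      (fun s hs => (hderiv s (interior_subset hs)).hasDerivWithinAt)
      (fun s hs => sub_nonneg.2 (hf s (interior_subset hs)))
  intro s hs
  have := hmono (left_mem_Icc.2 (hs.1.trans hs.2)) hs hs.1
  simp only [hF0, sub_zero] at this
  linarith

theorem apply_rpow_le_rpow_apply (hF0 : F 0 = 0) (hF : ∀ s ∈ Icc 0 y, HasDerivAt F (f s) s)
    (hmono : MonotoneOn f (Icc 0 y)) (hf : ∀ s ∈ Icc 0 y, 1 ≤ f s) (hy0 : 0 ≤ y) (hy1 : y ≤ 1)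
    {c : ℝ} (hc : 1 ≤ c) : F (y ^ c) ≤ F y ^ c := by
  have hpow_mem : ∀ s ∈ Icc 0 y, s ^ c ∈ Icc 0 y ∧ s ^ c ≤ s := fun s hs =>
    have hle := rpow_le_self_of_le_one hs.1 (hs.2.trans hy1) hc
    ⟨⟨rpow_nonneg hs.1 c, hle.trans hs.2⟩, hle⟩
  have hself := self_le_of_hasDerivAt_of_one_le hF0 hF hf
  have hderiv : ∀ s ∈ Icc 0 y, HasDerivAt (fun s => F s ^ c - F (s ^ c))
      (f s * c * F s ^ (c - 1) - f (s ^ c) * (c * s ^ (c - 1))) s := fun s hs =>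
    ((hF s hs).rpow_const (Or.inr hc)).sub
      ((hF _ (hpow_mem s hs).1).comp s (hasDerivAt_rpow_const (Or.inr hc)))
  have hg : MonotoneOn (fun s => F s ^ c - F (s ^ c)) (Icc 0 y) := by
    refine monotoneOn_of_hasDerivWithinAt_nonneg (convex_Icc 0 y)
      (fun s hs => (hderiv s hs).continuousAt.continuousWithinAt)
      (fun s hs => (hderiv s (interior_subset hs)).hasDerivWithinAt) fun s hs => ?_
    have hs : s ∈ Icc 0 y := interior_subset hs
    have hf_le : f (s ^ c) ≤ f s := hmono (hpow_mem s hs).1 hs (hpow_mem s hs).2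
    have hpow_le : s ^ (c - 1) ≤ F s ^ (c - 1) :=
      rpow_le_rpow hs.1 (hself s hs) (by linarith)
    have hf_nonneg : 0 ≤ f s := zero_le_one.trans (hf s hs)
    have : f (s ^ c) * (c * s ^ (c - 1)) ≤ f s * c * F s ^ (c - 1) :=
      calc f (s ^ c) * (c * s ^ (c - 1)) ≤ f s * c * s ^ (c - 1) := by
            rw [← mul_assoc, mul_comm _ c, mul_comm _ c]
            gcongr
            exact rpow_nonneg hs.1 _
        _ ≤ f s * c * F s ^ (c - 1) := by gcongr
    linarith
  have := hg (left_mem_Icc.2 hy0) (right_mem_Icc.2 hy0) hy0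
  simp only [hF0, zero_rpow (by linarith : c ≠ 0), sub_zero] at this
  linarith

end DerivativeComparison

theorem antitoneOn_rpow_one_div_of_apply_rpow_le {G : ℝ → ℝ} {x : ℝ} (hx : x ∈ Ioo 0 1)
    (hG0 : ∀ y ∈ Ioo (0:ℝ) 1, 0 ≤ G y)
    (hG : ∀ y ∈ Ioo (0:ℝ) 1, ∀ c : ℝ, 1 ≤ c → G (y ^ c) ≤ G y ^ c) :
    AntitoneOn (fun k : ℝ => G (x ^ k) ^ (1/k)) (Ioi 0) := by
  intro a (ha : 0 < a) b (hb : 0 < b) hab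
  have hxpow : ∀ k : ℝ, 0 < k → x ^ k ∈ Ioo (0:ℝ) 1 := fun k hk =>
    ⟨rpow_pos_of_pos hx.1 k, rpow_lt_one hx.1.le hx.2 hk⟩
  have hxb : x ^ b = (x ^ a) ^ (b / a) := by
    rw [← rpow_mul hx.1.le, mul_div_cancel₀ b ha.ne']
  calc G (x ^ b) ^ (1/b) ≤ (G (x ^ a) ^ (b / a)) ^ (1/b) := by
        gcongr
        · exact hG0 _ (hxpow b hb)
        · rw [hxb]; exact hG _ (hxpow a ha) _ ((one_le_div ha).2 hab)
    _ = G (x ^ a) ^ (1/a) := by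
        rw [← rpow_mul (hG0 _ (hxpow a ha))]
        congr 1
        field_simp

section ArcsinPQ

variable {p q : ℝ}

theorem one_sub_rpow_pos (hq : 0 < q) {t : ℝ} (ht0 : 0 ≤ t) (ht1 : t < 1) : 0 < 1 - t ^ q :=
  sub_pos.2 (rpow_lt_one ht0 ht1 hq)

theorem one_le_one_sub_rpow_rpow (hp : 0 ≤ p) (hq : 0 < q) {t : ℝ} (ht0 : 0 ≤ t) (ht1 : t < 1) :
    1 ≤ (1 - t ^ q) ^ (-1/p) :=
  one_le_rpow_of_pos_of_le_one_of_nonpos (one_sub_rpow_pos hq ht0 ht1)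
    (sub_le_self _ (rpow_nonneg ht0 q)) (div_nonpos_of_nonpos_of_nonneg (by norm_num) hp)

theorem monotoneOn_one_sub_rpow_rpow (hp : 0 ≤ p) (hq : 0 < q) :
    MonotoneOn (fun t : ℝ => (1 - t ^ q) ^ (-1/p)) (Ico 0 1) := by
  intro a ha b hb hab
  exact rpow_le_rpow_of_nonpos (one_sub_rpow_pos hq hb.1 hb.2)
    (sub_le_sub_left (rpow_le_rpow ha.1 hab hq.le) 1)
    (div_nonpos_of_nonpos_of_nonneg (by norm_num) hp)

theorem continuousAt_one_sub_rpow_rpow (hq : 0 < q) {t : ℝ} (ht0 : 0 ≤ t) (ht1 : t < 1) :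
    ContinuousAt (fun t : ℝ => (1 - t ^ q) ^ (-1/p)) t :=
  (continuousAt_const.sub (continuousAt_rpow_const t q (Or.inr hq.le))).rpow_const
    (Or.inl (one_sub_rpow_pos hq ht0 ht1).ne')

theorem hasDerivAt_arcsinpq (hq : 0 < q) {z : ℝ} (hz0 : 0 ≤ z) (hz1 : z < 1) :
    HasDerivAt (arcsinpq p q) ((1 - z ^ q) ^ (-1/p)) z := by
  have hcont : ContinuousOn (fun t : ℝ => (1 - t ^ q) ^ (-1/p)) (uIcc 0 z) := by
    rw [uIcc_of_le hz0]
    exact fun t ht =>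
      (continuousAt_one_sub_rpow_rpow hq ht.1 (ht.2.trans_lt hz1)).continuousWithinAt
  have hmeas : Measurable fun t : ℝ => (1 - t ^ q) ^ (-1/p) := by fun_prop
  exact intervalIntegral.integral_hasDerivAt_right hcont.intervalIntegrable
    hmeas.aestronglyMeasurable.stronglyMeasurableAtFilter
    (continuousAt_one_sub_rpow_rpow hq hz0 hz1)

theorem arcsinpq_zero : arcsinpq p q 0 = 0 :=
  intervalIntegral.integral_same

theorem self_le_arcsinpq (hp : 0 ≤ p) (hq : 0 < q) {y : ℝ} (hy0 : 0 ≤ y) (hy1 : y < 1) :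
    y ≤ arcsinpq p q y :=
  self_le_of_hasDerivAt_of_one_le arcsinpq_zero
    (fun _ hs => hasDerivAt_arcsinpq hq hs.1 (hs.2.trans_lt hy1))
    (fun _ hs => one_le_one_sub_rpow_rpow hp hq hs.1 (hs.2.trans_lt hy1)) y ⟨hy0, le_rfl⟩

theorem arcsinpq_rpow_le_rpow_arcsinpq (hp : 0 ≤ p) (hq : 0 < q) {y : ℝ} (hy0 : 0 ≤ y)
    (hy1 : y < 1) {c : ℝ} (hc : 1 ≤ c) : arcsinpq p q (y ^ c) ≤ arcsinpq p q y ^ c :=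
  apply_rpow_le_rpow_apply arcsinpq_zero
    (fun _ hs => hasDerivAt_arcsinpq hq hs.1 (hs.2.trans_lt hy1))
    ((monotoneOn_one_sub_rpow_rpow hp hq).mono fun _ hs => ⟨hs.1, hs.2.trans_lt hy1⟩)
    (fun _ hs => one_le_one_sub_rpow_rpow hp hq hs.1 (hs.2.trans_lt hy1)) hy0 hy1.le hc

end ArcsinPQ

theorem stmt6 (p q x : ℝ) (hp : 1 < p) (hq : 1 < q) (hx : x ∈ Ioo (0:ℝ) 1) :
    AntitoneOn (fun k : ℝ => (arcsinpq p q (x ^ k)) ^ (1/k)) (Ioi 0) := by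
  have hp0 : 0 ≤ p := by linarith
  have hq0 : 0 < q := by linarith
  exact antitoneOn_rpow_one_div_of_apply_rpow_le hx
    (fun y hy => hy.1.le.trans (self_le_arcsinpq hp0 hq0 hy.1.le hy.2))
    (fun y hy _ hc => arcsinpq_rpow_le_rpow_arcsinpq hp0 hq0 hy.1.le hy.2 hc)
end

section
/- Fix p, q > 1 and x ∈ (0,1). The function k ↦ (arsinh_{p,q}(x^k))^{1/k} is increasing on (0,∞). -/
/-!
Write `F a = ∫₀ᵃ f` with `f t = (1 + t^q)^(-1/p)`, which is decreasing on `[0, ∞)` with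
`f 0 = 1`. Being an average of a decreasing function, `F a / a` decreases in `a`, so
`c F(a) ≤ F(c a)` for `c ∈ (0, 1]`; moreover `F a ≤ a`. For `a ∈ (0, 1)` and `r ≥ 1`, taking
`c = a^(r-1)` gives `F(a)^r ≤ a^(r-1) F(a) ≤ F(a^r)`, and with `a = x^k₁`, `r = k₂/k₁` this is
the monotonicity.
-/
open Real Set

open MeasureTheory intervalIntegral

section AntitoneIntegrand

variable {f : ℝ → ℝ}

theorem AntitoneOn.intervalIntegrable_of_Ici (hf : AntitoneOn f (Ici 0)) {b : ℝ} (hb : 0 ≤ b) :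
    IntervalIntegrable f volume 0 b :=
  (hf.mono (by rw [uIcc_of_le hb]; exact Icc_subset_Ici_self)).intervalIntegrable

theorem AntitoneOn.mul_integral_le_integral_mul (hf : AntitoneOn f (Ici 0)) {a c : ℝ}
    (ha : 0 ≤ a) (hc₀ : 0 < c) (hc₁ : c ≤ 1) :
    c * ∫ t in 0..a, f t ≤ ∫ t in 0..c * a, f t := by
  have hfc : AntitoneOn (fun t => f (c * t)) (Ici 0) := fun s hs t ht hst =>
    hf (mul_nonneg hc₀.le hs) (mul_nonneg hc₀.le ht) (by gcongr)
  calc c * ∫ t in 0..a, f t ≤ c * ∫ t in 0..a, f (c * t) := by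
        gcongr
        refine integral_mono_on ha (hf.intervalIntegrable_of_Ici ha)
          (hfc.intervalIntegrable_of_Ici ha) fun t ht => ?_
        exact hf (mul_nonneg hc₀.le ht.1) ht.1 (mul_le_of_le_one_left ht.1 hc₁)
    _ = ∫ t in 0..c * a, f t := by
        simpa only [mul_zero, smul_eq_mul] using
          smul_integral_comp_mul_left f c (a := 0) (b := a)

theorem AntitoneOn.rpow_integral_le_integral_rpow (hf : AntitoneOn f (Ici 0))
    (hf_nonneg : ∀ t, 0 ≤ t → 0 ≤ f t) (hf_zero : f 0 ≤ 1) {a r : ℝ} (ha : a ∈ Ioc 0 1)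
    (hr : 1 ≤ r) :
    (∫ t in 0..a, f t) ^ r ≤ ∫ t in 0..a ^ r, f t := by
  set F := ∫ t in 0..a, f t
  have hF_nonneg : 0 ≤ F := integral_nonneg ha.1.le fun t ht => hf_nonneg t ht.1
  have hF_le : F ≤ a := by
    simpa using integral_mono_on ha.1.le (hf.intervalIntegrable_of_Ici ha.1.le)
      intervalIntegrable_const fun t ht =>
        (hf self_mem_Ici ht.1 ht.1).trans hf_zero
  calc F ^ r = F ^ (r - 1) * F := by
        rw [← rpow_add_one' hF_nonneg (by linarith), sub_add_cancel]
    _ ≤ a ^ (r - 1) * F := by gcongr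
    _ ≤ ∫ t in 0..a ^ (r - 1) * a, f t :=
        hf.mul_integral_le_integral_mul ha.1.le (rpow_pos_of_pos ha.1 _)
          (rpow_le_one ha.1.le ha.2 (by linarith))
    _ = ∫ t in 0..a ^ r, f t := by rw [← rpow_add_one ha.1.ne', sub_add_cancel]

end AntitoneIntegrand

theorem monotoneOn_rpow_one_div_comp_rpow {F : ℝ → ℝ}
    (hF_nonneg : ∀ a ∈ Ioo (0:ℝ) 1, 0 ≤ F a)
    (hF : ∀ a ∈ Ioo (0:ℝ) 1, ∀ r : ℝ, 1 ≤ r → F a ^ r ≤ F (a ^ r))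
    {x : ℝ} (hx : x ∈ Ioo (0:ℝ) 1) :
    MonotoneOn (fun k : ℝ => F (x ^ k) ^ (1 / k)) (Ioi 0) := by
  intro k₁ (hk₁ : 0 < k₁) k₂ (hk₂ : 0 < k₂) hk
  have ha : x ^ k₁ ∈ Ioo (0:ℝ) 1 :=
    ⟨rpow_pos_of_pos hx.1 _, rpow_lt_one hx.1.le hx.2 hk₁⟩
  calc F (x ^ k₁) ^ (1 / k₁) = (F (x ^ k₁) ^ (k₂ / k₁)) ^ (1 / k₂) := by
        rw [← rpow_mul (hF_nonneg _ ha)]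
        field_simp [hk₂.ne']
    _ ≤ F ((x ^ k₁) ^ (k₂ / k₁)) ^ (1 / k₂) := by
        refine rpow_le_rpow (rpow_nonneg (hF_nonneg _ ha) _) ?_ (by positivity)
        exact hF _ ha _ ((one_le_div hk₁).2 hk)
    _ = F (x ^ k₂) ^ (1 / k₂) := by
        rw [← rpow_mul hx.1.le, mul_div_cancel₀ _ hk₁.ne']

theorem antitoneOn_arsinhpq_integrand {p q : ℝ} (hp : 0 ≤ p) (hq : 0 ≤ q) :
    AntitoneOn (fun t : ℝ => (1 + t ^ q) ^ (-1 / p)) (Ici 0) := fun s (hs : 0 ≤ s) t _ hst =>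
  rpow_le_rpow_of_nonpos (add_pos_of_pos_of_nonneg one_pos (rpow_nonneg hs q)) (by gcongr)
    (div_nonpos_of_nonpos_of_nonneg (by norm_num) hp)

theorem stmt7 (p q x : ℝ) (hp : 1 < p) (hq : 1 < q) (hx : x ∈ Ioo (0:ℝ) 1) :
    MonotoneOn (fun k : ℝ => (arsinhpq p q (x ^ k)) ^ (1/k)) (Ioi 0) := by
  have hf := antitoneOn_arsinhpq_integrand (zero_le_one.trans hp.le) (zero_le_one.trans hq.le)
  have hf_nonneg : ∀ t : ℝ, 0 ≤ t → 0 ≤ (1 + t ^ q) ^ (-1 / p) := fun t ht =>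
    rpow_nonneg (add_nonneg zero_le_one (rpow_nonneg ht q)) _
  have hf_zero : (1 + (0:ℝ) ^ q) ^ (-1 / p) ≤ 1 := by
    rw [zero_rpow (by linarith), add_zero, one_rpow]
  refine monotoneOn_rpow_one_div_comp_rpow (fun a ha => ?_) (fun a ha r hr => ?_) hx
  · exact integral_nonneg ha.1.le fun t ht => hf_nonneg t ht.1
  · exact hf.rpow_integral_le_integral_rpow hf_nonneg hf_zero (Ioo_subset_Ioc_self ha) hr
end

section
/- Fix p, q > 1 and x ∈ (0,1). The function k ↦ k·arcsin_{p,q}(x/k) is decreasing on (1,∞); in particular, for k ≥ 1, arcsin_{p,q}(x/k) ≤ arcsin_{p,q}(x)/k. -/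
open Real Set

lemma arcsinpq_key (p q x : ℝ) (hp : 1 < p) (hq : 1 < q) (hx : x ∈ Ioo (0:ℝ) 1)
    {k₁ k₂ : ℝ} (h1 : 1 ≤ k₁) (h12 : k₁ ≤ k₂) :
    k₂ * arcsinpq p q (x / k₂) ≤ k₁ * arcsinpq p q (x / k₁) := by
  obtain ⟨hx0, hx1⟩ := hx
  have hk1 : (0:ℝ) < k₁ := lt_of_lt_of_le zero_lt_one h1
  have hk2 : (0:ℝ) < k₂ := lt_of_lt_of_le hk1 h12
  -- representation
  have hrepr : ∀ k : ℝ, 0 < k →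
      k * arcsinpq p q (x / k) = ∫ s in (0:ℝ)..x, (1 - (s / k) ^ q) ^ (-1/p) := by
    intro k hk
    rw [intervalIntegral.integral_comp_div (fun t => (1 - t ^ q) ^ (-1/p)) hk.ne']
    simp [arcsinpq, smul_eq_mul]
  -- continuity / integrability
  have hcont : ∀ k : ℝ, 1 ≤ k →
      ContinuousOn (fun s : ℝ => (1 - (s / k) ^ q) ^ (-1/p)) (Icc (0:ℝ) x) := by
    intro k hk
    have hkpos : (0:ℝ) < k := lt_of_lt_of_le zero_lt_one hk
    have hbase : ∀ s ∈ Icc (0:ℝ) x, (0:ℝ) < 1 - (s / k) ^ q := by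
      intro s hs
      have h0 : (0:ℝ) ≤ s / k := div_nonneg hs.1 hkpos.le
      have h1' : s / k < 1 := by
        have : s / k ≤ s := div_le_self (hs.1) hk
        linarith [hs.2]
      have := Real.rpow_lt_one h0 h1' (lt_trans zero_lt_one hq)
      linarith
    have hinner : ContinuousOn (fun s : ℝ => 1 - (s / k) ^ q) (Icc (0:ℝ) x) := by
      apply ContinuousOn.sub continuousOn_const
      exact (continuousOn_id.div_const k).rpow_const fun s hs => Or.inr (le_of_lt (lt_trans zero_lt_one hq))
    exact hinner.rpow_const fun s hs => Or.inl (ne_of_gt (hbase s hs))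
  have hint : ∀ k : ℝ, 1 ≤ k →
      IntervalIntegrable (fun s : ℝ => (1 - (s / k) ^ q) ^ (-1/p)) MeasureTheory.volume 0 x := by
    intro k hk
    apply ContinuousOn.intervalIntegrable
    rw [uIcc_of_le hx0.le]; exact hcont k hk
  rw [hrepr k₁ hk1, hrepr k₂ hk2]
  apply intervalIntegral.integral_mono_on hx0.le (hint k₂ (le_trans h1 h12)) (hint k₁ h1)
  intro s hs
  have hs0 : (0:ℝ) ≤ s := hs.1
  have hdiv : s / k₂ ≤ s / k₁ := div_le_div_of_nonneg_left hs0 hk1 h12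
  have hdiv2 : (0:ℝ) ≤ s / k₂ := div_nonneg hs0 hk2.le
  have hrpow : (s / k₂) ^ q ≤ (s / k₁) ^ q :=
    Real.rpow_le_rpow hdiv2 hdiv (le_of_lt (lt_trans zero_lt_one hq))
  have hpos1 : (0:ℝ) < 1 - (s / k₁) ^ q := by
    have h0 : (0:ℝ) ≤ s / k₁ := div_nonneg hs0 hk1.le
    have h1' : s / k₁ < 1 := by
      have : s / k₁ ≤ s := div_le_self hs0 h1
      linarith [hs.2]
    have := Real.rpow_lt_one h0 h1' (lt_trans zero_lt_one hq)
    linarith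
  exact Real.rpow_le_rpow_of_nonpos hpos1 (by linarith)
    (by rw [neg_div]; exact neg_nonpos.mpr (le_of_lt (div_pos zero_lt_one (lt_trans zero_lt_one hp))))

theorem stmt8 (p q x : ℝ) (hp : 1 < p) (hq : 1 < q) (hx : x ∈ Ioo (0:ℝ) 1) :
    AntitoneOn (fun k : ℝ => k * arcsinpq p q (x / k)) (Ioi 1) ∧
      ∀ k : ℝ, 1 ≤ k → arcsinpq p q (x / k) ≤ arcsinpq p q x / k := by
  constructor
  · intro k₁ hk₁ k₂ _ h12
    exact arcsinpq_key p q x hp hq hx (le_of_lt hk₁) h12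
  · intro k hk
    have hkpos : (0:ℝ) < k := lt_of_lt_of_le zero_lt_one hk
    have := arcsinpq_key p q x hp hq hx le_rfl hk
    rw [div_one, one_mul] at this
    rw [le_div_iff₀ hkpos, mul_comm]
    exact this
end

section
/- For p, q > 1 and r, s ∈ (0,1), one has arsinh_{p,q}(r)·arsinh_{p,q}(s) ≤ √(arsinh_{p,q}(r²)·arsinh_{p,q}(s²)) ≤ arsinh_{p,q}(r·s). -/
/-!
Write `F = arsinhpq p q` and `f = (1 + t ^ q) ^ (-1/p)` for its integrand. Substituting
`t ↦ c t` gives `F (c x) = c ∫₀ˣ f (c t) dt`. Since `f` is decreasing and at most `1`, this yields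
`F x ^ 2 ≤ x F x ≤ F (x ^ 2)` on `[0, 1]`. For the second inequality, the same substitution
together with the pointwise inequality `f b f (a v) ≤ f a f (b v)` (for `a ≤ b`, `v ≤ 1`) shows
that `x f x / F x` is decreasing, i.e. `F ∘ exp` is log-concave, which is
`F (r ^ 2) F (s ^ 2) ≤ F (r s) ^ 2`.
-/

open Real Set

open MeasureTheory intervalIntegral

section LogConcave

variable {G g : ℝ → ℝ}

/-- `hanti` is the division-free form of "`x G'(x) / G(x)` is antitone". -/
theorem antitoneOn_apply_mul_mul_apply_mul_inv (hG : ∀ y, 0 < y → HasDerivAt G (g y) y)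
    (hanti : ∀ a b, 0 < a → a ≤ b → b * g b * G a ≤ a * g a * G b) {c : ℝ}
    (hc : 0 < c) :
    AntitoneOn (fun x => G (c * x) * G (c * x⁻¹)) (Ici 1) := by
  have hderiv : ∀ x : ℝ, 0 < x → HasDerivAt (fun x => G (c * x) * G (c * x⁻¹))
      (c * g (c * x) * G (c * x⁻¹) - c * (x ^ 2)⁻¹ * g (c * x⁻¹) * G (c * x)) x := by
    intro x hx
    have h₁ := (hG _ (mul_pos hc hx)).comp x ((hasDerivAt_id x).const_mul c)
    have h₂ := (hG _ (mul_pos hc (inv_pos.2 hx))).comp x ((hasDerivAt_inv hx.ne').const_mul c)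
    refine (h₁.mul h₂).congr_deriv ?_
    simp only [Function.comp_apply]
    ring
  refine antitoneOn_of_deriv_nonpos (convex_Ici 1)
    (fun x hx => (hderiv x (one_pos.trans_le hx)).continuousAt.continuousWithinAt)
    (fun x hx => ?_) (fun x hx => ?_) <;> rw [interior_Ici] at hx
  · exact (hderiv x (one_pos.trans hx)).differentiableAt.differentiableWithinAt
  · have hx₀ : 0 < x := one_pos.trans hx
    rw [(hderiv x hx₀).deriv]
    have hle : c * x⁻¹ ≤ c * x :=
      mul_le_mul_of_nonneg_left ((inv_le_one_of_one_le₀ hx.le).trans hx.le) hc.le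
    have key := hanti _ _ (mul_pos hc (inv_pos.2 hx₀)) hle
    have hx1 : x * x⁻¹ = 1 := mul_inv_cancel₀ hx₀.ne'
    linear_combination x⁻¹ * key - c * g (c * x) * G (c * x⁻¹) * hx1

theorem apply_sq_mul_apply_sq_le_sq_apply_mul (hG : ∀ y, 0 < y → HasDerivAt G (g y) y)
    (hanti : ∀ a b, 0 < a → a ≤ b → b * g b * G a ≤ a * g a * G b) {r s : ℝ}
    (hr : 0 < r) (hs : 0 < s) : G (r ^ 2) * G (s ^ 2) ≤ G (r * s) ^ 2 := by
  wlog hrs : r ≤ s generalizing r s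
  · have := this hs hr (le_of_not_ge hrs)
    rwa [mul_comm s r, mul_comm (G (s ^ 2))] at this
  have hsr : 1 ≤ s / r := (one_le_div hr).2 hrs
  have := antitoneOn_apply_mul_mul_apply_mul_inv hG hanti (mul_pos hr hs) (mem_Ici.2 le_rfl)
    (mem_Ici.2 hsr) hsr
  have e₁ : r * s * (s / r) = s ^ 2 := by field_simp
  have e₂ : r * s * (s / r)⁻¹ = r ^ 2 := by field_simp
  simp only [e₁, e₂, inv_one, mul_one] at this
  linarith [sq (G (r * s))]

end LogConcave

noncomputable def arsinhpqIntegrand (p q t : ℝ) : ℝ := (1 + t ^ q) ^ (-1/p)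

section Arsinhpq

variable {p q : ℝ}

theorem arsinhpq_eq_integral (p q x : ℝ) :
    arsinhpq p q x = ∫ t in (0:ℝ)..x, arsinhpqIntegrand p q t := rfl

theorem arsinhpq_mul (p q c x : ℝ) :
    arsinhpq p q (c * x) = c * ∫ t in (0:ℝ)..x, arsinhpqIntegrand p q (c * t) := by
  rw [mul_integral_comp_mul_left, mul_zero, arsinhpq_eq_integral]

theorem arsinhpqIntegrand_nonneg {t : ℝ} (ht : 0 ≤ t) : 0 ≤ arsinhpqIntegrand p q t := by
  unfold arsinhpqIntegrand
  positivity

theorem arsinhpqIntegrand_le_one (hp : 0 ≤ p) {t : ℝ} (ht : 0 ≤ t) :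
    arsinhpqIntegrand p q t ≤ 1 :=
  rpow_le_one_of_one_le_of_nonpos (le_add_of_nonneg_right (rpow_nonneg ht q))
    (div_nonpos_of_nonpos_of_nonneg (by norm_num) hp)

theorem antitoneOn_arsinhpqIntegrand (hp : 0 ≤ p) (hq : 0 ≤ q) :
    AntitoneOn (arsinhpqIntegrand p q) (Ici 0) := fun _ ha _ _ hab =>
  rpow_le_rpow_of_nonpos (add_pos_of_pos_of_nonneg one_pos (rpow_nonneg ha q))
    (add_le_add_right (rpow_le_rpow ha hab hq) 1)
    (div_nonpos_of_nonpos_of_nonneg (by norm_num) hp)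

theorem continuousOn_arsinhpqIntegrand (hq : 0 ≤ q) :
    ContinuousOn (arsinhpqIntegrand p q) (Ici 0) := fun t ht =>
  ((continuousAt_const.add (continuousAt_rpow_const t q (Or.inr hq))).rpow_const
    (Or.inl (add_pos_of_pos_of_nonneg one_pos (rpow_nonneg ht q)).ne')).continuousWithinAt

theorem intervalIntegrable_arsinhpqIntegrand (hq : 0 ≤ q) {x : ℝ} (hx : 0 ≤ x) :
    IntervalIntegrable (arsinhpqIntegrand p q) volume 0 x :=
  ((continuousOn_arsinhpqIntegrand hq).mono Icc_subset_Ici_self).intervalIntegrable_of_Icc hx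

theorem intervalIntegrable_arsinhpqIntegrand_comp_mul (hq : 0 ≤ q) {c x : ℝ} (hc : 0 ≤ c)
    (hx : 0 ≤ x) : IntervalIntegrable (fun t => arsinhpqIntegrand p q (c * t)) volume 0 x :=
  ((continuousOn_arsinhpqIntegrand hq).comp (continuousOn_const.mul continuousOn_id)
    fun _ ht => mul_nonneg hc ht.1).intervalIntegrable_of_Icc hx

theorem arsinhpq_nonneg {x : ℝ} (hx : 0 ≤ x) : 0 ≤ arsinhpq p q x :=
  integral_nonneg hx fun _ ht => arsinhpqIntegrand_nonneg ht.1

theorem arsinhpq_le_self (hp : 0 ≤ p) (hq : 0 ≤ q) {x : ℝ} (hx : 0 ≤ x) :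
    arsinhpq p q x ≤ x :=
  calc arsinhpq p q x ≤ ∫ _ in (0:ℝ)..x, (1:ℝ) :=
        integral_mono_on hx (intervalIntegrable_arsinhpqIntegrand hq hx)
          intervalIntegrable_const fun _ ht => arsinhpqIntegrand_le_one hp ht.1
    _ = x := by simp

theorem mul_arsinhpq_le_arsinhpq_mul (hp : 0 ≤ p) (hq : 0 ≤ q) {c x : ℝ} (hc₀ : 0 ≤ c)
    (hc₁ : c ≤ 1) (hx : 0 ≤ x) : c * arsinhpq p q x ≤ arsinhpq p q (c * x) := by
  rw [arsinhpq_mul, arsinhpq_eq_integral]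
  gcongr
  refine integral_mono_on hx (intervalIntegrable_arsinhpqIntegrand hq hx)
    (intervalIntegrable_arsinhpqIntegrand_comp_mul hq hc₀ hx) fun t ht => ?_
  exact antitoneOn_arsinhpqIntegrand hp hq (mul_nonneg hc₀ ht.1) ht.1
    (mul_le_of_le_one_left ht.1 hc₁)

theorem sq_arsinhpq_le_arsinhpq_sq (hp : 0 ≤ p) (hq : 0 ≤ q) {x : ℝ} (hx₀ : 0 ≤ x)
    (hx₁ : x ≤ 1) :
    arsinhpq p q x ^ 2 ≤ arsinhpq p q (x ^ 2) :=
  calc arsinhpq p q x ^ 2 ≤ x * arsinhpq p q x := by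
        rw [sq]
        exact mul_le_mul_of_nonneg_right (arsinhpq_le_self hp hq hx₀) (arsinhpq_nonneg hx₀)
    _ ≤ arsinhpq p q (x ^ 2) := by
        rw [sq]
        exact mul_arsinhpq_le_arsinhpq_mul hp hq hx₀ hx₁ hx₀

theorem hasDerivAt_arsinhpq (hq : 0 ≤ q) {x : ℝ} (hx : 0 < x) :
    HasDerivAt (arsinhpq p q) (arsinhpqIntegrand p q x) x :=
  integral_hasDerivAt_right (intervalIntegrable_arsinhpqIntegrand hq hx.le)
    ((continuousOn_arsinhpqIntegrand hq).mono Ioi_subset_Ici_self |>.stronglyMeasurableAtFilter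
      isOpen_Ioi x hx)
    ((continuousOn_arsinhpqIntegrand hq).continuousAt (Ici_mem_nhds hx))

theorem arsinhpqIntegrand_mul_le_mul (hp : 0 ≤ p) (hq : 0 ≤ q) {a b v : ℝ} (ha : 0 ≤ a)
    (hab : a ≤ b) (hv₀ : 0 ≤ v) (hv₁ : v ≤ 1) :
    arsinhpqIntegrand p q b * arsinhpqIntegrand p q (a * v)
      ≤ arsinhpqIntegrand p q a * arsinhpqIntegrand p q (b * v) := by
  have hb := ha.trans hab
  have hA := rpow_nonneg ha q
  have hV := rpow_nonneg hv₀ q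
  have hAB : a ^ q ≤ b ^ q := rpow_le_rpow ha hab hq
  have hV₁ : v ^ q ≤ 1 := rpow_le_one hv₀ hv₁ hq
  unfold arsinhpqIntegrand
  rw [← mul_rpow (by positivity) (by positivity), ← mul_rpow (by positivity) (by positivity),
    mul_rpow ha hv₀, mul_rpow hb hv₀]
  refine rpow_le_rpow_of_nonpos (by positivity) ?_
    (div_nonpos_of_nonpos_of_nonneg (by norm_num) hp)
  nlinarith [mul_nonneg (sub_nonneg.2 hAB) (sub_nonneg.2 hV₁)]

theorem mul_arsinhpqIntegrand_mul_arsinhpq_le (hp : 0 ≤ p) (hq : 0 ≤ q) {a b : ℝ}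
    (ha : 0 ≤ a) (hab : a ≤ b) :
    b * arsinhpqIntegrand p q b * arsinhpq p q a
      ≤ a * arsinhpqIntegrand p q a * arsinhpq p q b := by
  have hb := ha.trans hab
  have key : arsinhpqIntegrand p q b * ∫ v in (0:ℝ)..1, arsinhpqIntegrand p q (a * v)
      ≤ arsinhpqIntegrand p q a * ∫ v in (0:ℝ)..1, arsinhpqIntegrand p q (b * v) := by
    rw [← intervalIntegral.integral_const_mul, ← intervalIntegral.integral_const_mul]
    exact integral_mono_on zero_le_one
      ((intervalIntegrable_arsinhpqIntegrand_comp_mul hq ha zero_le_one).const_mul _)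
      ((intervalIntegrable_arsinhpqIntegrand_comp_mul hq hb zero_le_one).const_mul _)
      fun v hv => arsinhpqIntegrand_mul_le_mul hp hq ha hab hv.1 hv.2
  have hFa : arsinhpq p q a = a * ∫ v in (0:ℝ)..1, arsinhpqIntegrand p q (a * v) := by
    simpa using arsinhpq_mul p q a 1
  have hFb : arsinhpq p q b = b * ∫ v in (0:ℝ)..1, arsinhpqIntegrand p q (b * v) := by
    simpa using arsinhpq_mul p q b 1
  rw [hFa, hFb]
  linear_combination mul_le_mul_of_nonneg_left key (mul_nonneg ha hb)

end Arsinhpq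

theorem stmt10 (p q r s : ℝ) (hp : 1 < p) (hq : 1 < q)
    (hr : r ∈ Ioo (0:ℝ) 1) (hs : s ∈ Ioo (0:ℝ) 1) :
    arsinhpq p q r * arsinhpq p q s ≤ Real.sqrt (arsinhpq p q (r ^ 2) * arsinhpq p q (s ^ 2)) ∧
      Real.sqrt (arsinhpq p q (r ^ 2) * arsinhpq p q (s ^ 2)) ≤ arsinhpq p q (r * s) := by
  have hp₀ : 0 ≤ p := zero_le_one.trans hp.le
  have hq₀ : 0 ≤ q := zero_le_one.trans hq.le
  obtain ⟨hr₀, hr₁⟩ := hr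
  obtain ⟨hs₀, hs₁⟩ := hs
  have hsq : arsinhpq p q r ^ 2 * arsinhpq p q s ^ 2
      ≤ arsinhpq p q (r ^ 2) * arsinhpq p q (s ^ 2) :=
    mul_le_mul (sq_arsinhpq_le_arsinhpq_sq hp₀ hq₀ hr₀.le hr₁.le)
      (sq_arsinhpq_le_arsinhpq_sq hp₀ hq₀ hs₀.le hs₁.le) (sq_nonneg _)
      (arsinhpq_nonneg (sq_nonneg r))
  have hlog : arsinhpq p q (r ^ 2) * arsinhpq p q (s ^ 2) ≤ arsinhpq p q (r * s) ^ 2 :=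
    apply_sq_mul_apply_sq_le_sq_apply_mul (fun _ hy => hasDerivAt_arsinhpq hq₀ hy)
      (fun _ _ ha hab => mul_arsinhpqIntegrand_mul_arsinhpq_le hp₀ hq₀ ha.le hab) hr₀ hs₀
  exact ⟨(le_abs_self _).trans (abs_le_sqrt (by rwa [mul_pow])),
    sqrt_le_iff.2 ⟨arsinhpq_nonneg (mul_nonneg hr₀.le hs₀.le), hlog⟩⟩
end

section
/- For p, q > 1, the function x ↦ log(arsinh_{p,q}(e^x)) is concave on ℝ restricted to where e^x < 1 (i.e. x < 0). -/
open Real Set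

/-!
Write `F u = ∫₀ᵘ g`. Since `(log F(eˣ))' = u g(u) / F(u)` with `u = eˣ`, concavity amounts to
`F(u) / (u g(u))` being nondecreasing. Substituting `t = u s` gives
`F(u) / (u g(u)) = ∫₀¹ g(u s) / g(u) ds`, so it suffices that `g(u s) / g(u)` is nondecreasing in
`u` for each `s ∈ [0, 1]`. For `g(t) = (1 + t^q)^(-1/p)` this ratio is
`((1 + u^q s^q) / (1 + u^q))^(-1/p)`, and the base decreases in `u` because `s^q ≤ 1`.
-/

open intervalIntegral MeasureTheory

section LogConcavity

variable {g : ℝ → ℝ}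

lemma intervalIntegrable_of_continuousOn_Ici (hg : ContinuousOn g (Ici 0)) {a b : ℝ}
    (ha : 0 ≤ a) (hb : 0 ≤ b) : IntervalIntegrable g volume a b :=
  (hg.mono fun _ hx => le_trans (le_min ha hb) hx.1).intervalIntegrable

lemma integral_div_mul_eq_integral_ratio {u : ℝ} (hu : u ≠ 0) :
    (∫ t in (0:ℝ)..u, g t) / (u * g u) = ∫ s in (0:ℝ)..1, g (u * s) / g u := by
  have hsubst := mul_integral_comp_mul_left (a := 0) (b := 1) (c := u) (f := g)
  rw [mul_zero, mul_one] at hsubst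
  rw [intervalIntegral.integral_div, ← hsubst, mul_div_mul_left _ _ hu]

lemma monotoneOn_integral_div_mul (hg : ContinuousOn g (Ici 0))
    (hratio : ∀ s ∈ Icc (0:ℝ) 1, MonotoneOn (fun u => g (u * s) / g u) (Ioi 0)) :
    MonotoneOn (fun u => (∫ t in (0:ℝ)..u, g t) / (u * g u)) (Ioi 0) := by
  have hint : ∀ u ∈ Ioi (0:ℝ), IntervalIntegrable (fun s => g (u * s) / g u) volume 0 1 :=
    fun u hu => ContinuousOn.intervalIntegrable <|
      ((hg.comp (continuous_const_mul u).continuousOn) fun s hs => by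
        rw [uIcc_of_le zero_le_one] at hs
        exact mul_nonneg (le_of_lt hu) hs.1).div_const _
  intro u hu v hv huv
  simp only [integral_div_mul_eq_integral_ratio (ne_of_gt hu),
    integral_div_mul_eq_integral_ratio (ne_of_gt hv)]
  exact integral_mono_on zero_le_one (hint u hu) (hint v hv)
    fun s hs => hratio s hs hu hv huv

lemma hasDerivAt_integral_of_continuousOn_Ici (hg : ContinuousOn g (Ici 0)) {u : ℝ}
    (hu : 0 < u) : HasDerivAt (fun x => ∫ t in (0:ℝ)..x, g t) (g u) u :=
  integral_hasDerivAt_right (intervalIntegrable_of_continuousOn_Ici hg le_rfl hu.le)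
    ((hg.mono Ioi_subset_Ici_self).stronglyMeasurableAtFilter isOpen_Ioi u hu)
    (hg.continuousAt (Ici_mem_nhds hu))

theorem concaveOn_log_integral_comp_exp (hg : ContinuousOn g (Ici 0))
    (hpos : ∀ t, 0 < t → 0 < g t)
    (hratio : ∀ s ∈ Icc (0:ℝ) 1, MonotoneOn (fun u => g (u * s) / g u) (Ioi 0)) :
    ConcaveOn ℝ univ (fun x => Real.log (∫ t in (0:ℝ)..Real.exp x, g t)) := by
  set F : ℝ → ℝ := fun x => ∫ t in (0:ℝ)..x, g t
  have hF_pos : ∀ u, 0 < u → 0 < F u := fun u hu =>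
    intervalIntegral_pos_of_pos_on (intervalIntegrable_of_continuousOn_Ici hg le_rfl hu.le)
      (fun t ht => hpos t ht.1) hu
  have hderiv : ∀ x, HasDerivAt (fun x => Real.log (F (Real.exp x)))
      (g (Real.exp x) * Real.exp x / F (Real.exp x)) x := fun x =>
    ((hasDerivAt_integral_of_continuousOn_Ici hg (exp_pos x)).comp x (hasDerivAt_exp x)).log
      (hF_pos _ (exp_pos x)).ne'
  refine Antitone.concaveOn_univ_of_deriv (fun x => (hderiv x).differentiableAt) ?_
  intro x y hxy
  have hu := exp_pos x
  have hv := exp_pos y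
  rw [(hderiv x).deriv, (hderiv y).deriv]
  simp only [mul_comm (g _), ← inv_div (F _)]
  exact inv_anti₀ (div_pos (hF_pos _ hu) (mul_pos hu (hpos _ hu)))
    (monotoneOn_integral_div_mul hg hratio hu hv (exp_le_exp.mpr hxy))

end LogConcavity

section OnePlusRpow

variable {q r : ℝ}

lemma one_add_rpow_pos {t : ℝ} (ht : 0 ≤ t) : 0 < 1 + t ^ q := by
  have := rpow_nonneg ht q
  linarith

lemma continuousOn_one_add_rpow_rpow (hq : 0 ≤ q) :
    ContinuousOn (fun t : ℝ => (1 + t ^ q) ^ r) (Ici 0) :=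
  ((continuous_const.add (continuous_rpow_const hq)).continuousOn).rpow_const
    fun _ ht => Or.inl (one_add_rpow_pos ht).ne'

lemma monotoneOn_one_add_rpow_rpow_ratio (hq : 0 ≤ q) (hr : r ≤ 0) {s : ℝ}
    (hs : s ∈ Icc (0:ℝ) 1) :
    MonotoneOn (fun u : ℝ => (1 + (u * s) ^ q) ^ r / (1 + u ^ q) ^ r) (Ioi 0) := by
  intro u hu v hv huv
  have hu0 : (0:ℝ) ≤ u := le_of_lt hu
  have hv0 : (0:ℝ) ≤ v := le_of_lt hv
  have hs0 := hs.1
  dsimp only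
  rw [← div_rpow (one_add_rpow_pos (mul_nonneg hu0 hs0)).le (one_add_rpow_pos hu0).le,
    ← div_rpow (one_add_rpow_pos (mul_nonneg hv0 hs0)).le (one_add_rpow_pos hv0).le]
  refine rpow_le_rpow_of_nonpos (div_pos (one_add_rpow_pos (mul_nonneg hv0 hs0))
    (one_add_rpow_pos hv0)) ?_ hr
  rw [div_le_div_iff₀ (one_add_rpow_pos hv0) (one_add_rpow_pos hu0), mul_rpow hu0 hs0,
    mul_rpow hv0 hs0]
  have huv_q : u ^ q ≤ v ^ q := rpow_le_rpow hu0 huv hq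
  have hsq : s ^ q ≤ 1 := rpow_le_one hs0 hs.2 hq
  have := rpow_nonneg hs0 q
  nlinarith

end OnePlusRpow

theorem stmt12 (p q : ℝ) (hp : 1 < p) (hq : 1 < q) :
    ConcaveOn ℝ (Iio (0:ℝ)) (fun x => Real.log (arsinhpq p q (Real.exp x))) := by
  have hexp : -1 / p ≤ 0 := div_nonpos_of_nonpos_of_nonneg (by norm_num) (by linarith)
  refine (concaveOn_log_integral_comp_exp (continuousOn_one_add_rpow_rpow (by linarith))
    (fun t ht => rpow_pos_of_pos (one_add_rpow_pos ht.le) _)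
    (fun s hs => monotoneOn_one_add_rpow_rpow_ratio (by linarith) hexp hs)).subset
    (subset_univ _) (convex_Iio 0)
end
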